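/- Lagrange Inversion Formula: if f(y) is a formal power series with f(0) ≠ 0, then the compositional inverse of x = y/f(y) is given by y = Σ_{k≥1} (x^k/k!) · [(d/dy)^{k-1} (f(y)^k)]|_{y=0}. -/

import Mathlib

/-!
Put `S = f⁻¹(y)`; the hypothesis says `y * S = X`, i.e. `S = X / y`. The heart of the proof is the
change of variables for formal residues: for every power series `g`,
`[X^N] (y' * g(y) * S^(N+1)) = [X^N] g`, i.e. `res (g(y) y' / y^(N+1)) = res (g / X^(N+1))`.
By linearity it is enough to take `g = X^m`, and since `y^m S^(N+1) = X^m S^(N-m+1)` everything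
reduces to `[X^j] (y' S^(j+1)) = δ_{j,0}`. For `j > 0` this holds because differentiating
`y S = X` gives `y' S^(j+1) = S^j - X (S^j)' / j`, and `[X^(j-1)] (S^j)' = j [X^j] S^j`.
Taking `g = f^(N+1)`, whose composite with `y` is `S^-(N+1)`, yields
`(N+1) [X^(N+1)] y = [X^N] y' = [X^N] f^(N+1)`.
-/

open PowerSeries

/-- Formal composition `f ∘ g` of power series, valid when `g` has zero
constant term. -/
noncomputable def psComp {K : Type*} [CommRing K] (f g : PowerSeries K) : PowerSeries K :=
  PowerSeries.mk fun n =>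
    PowerSeries.coeff n (∑ k ∈ Finset.range (n + 1), PowerSeries.coeff k f • g ^ k)

namespace PowerSeries

variable {R : Type*} [CommRing R]

theorem coeff_pow_eq_zero_of_lt {y : R⟦X⟧} (hy0 : constantCoeff y = 0) {n k : ℕ} (h : n < k) :
    coeff n (y ^ k) = 0 :=
  X_pow_dvd_iff.mp (pow_dvd_pow_of_dvd (X_dvd_iff.mpr hy0) k) n h

theorem coeff_subst_eq_sum_range {y : R⟦X⟧} (hy0 : constantCoeff y = 0) (g : R⟦X⟧) {n N : ℕ}
    (h : n ≤ N) :
    coeff n (g.subst y) = ∑ m ∈ Finset.range (N + 1), coeff m g * coeff n (y ^ m) := by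
  rw [coeff_subst' (HasSubst.of_constantCoeff_zero' hy0)]
  refine finsum_eq_sum_of_support_subset _ fun m hm => ?_
  rw [Function.mem_support] at hm
  by_contra hmN
  rw [Finset.coe_range, Set.mem_Iio, not_lt] at hmN
  exact hm (by rw [coeff_pow_eq_zero_of_lt hy0 (by omega), smul_zero])

theorem coeff_mul_subst_eq_sum_range {y : R⟦X⟧} (hy0 : constantCoeff y = 0) (A g : R⟦X⟧)
    (n : ℕ) :
    coeff n (A * g.subst y) = ∑ m ∈ Finset.range (n + 1), coeff m g * coeff n (A * y ^ m) := by
  simp only [coeff_mul, Finset.mul_sum]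
  rw [Finset.sum_congr rfl fun p hp => by
    rw [coeff_subst_eq_sum_range hy0 g (Finset.HasAntidiagonal.antidiagonal.snd_le hp),
      Finset.mul_sum]]
  rw [Finset.sum_comm]
  exact Finset.sum_congr rfl fun m _ => Finset.sum_congr rfl fun p _ => mul_left_comm _ _ _

end PowerSeries

theorem psComp_eq_subst {R : Type*} [CommRing R] {y : R⟦X⟧} (hy0 : constantCoeff y = 0)
    (g : R⟦X⟧) : psComp g y = g.subst y := by
  ext n
  rw [psComp, coeff_mk, coeff_subst_eq_sum_range hy0 g le_rfl, map_sum]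
  simp only [coeff_smul, smul_eq_mul]

namespace PowerSeries

section Residue

variable {R : Type*} [CommRing R] [IsAddTorsionFree R] {y S : R⟦X⟧}

theorem coeff_derivative_mul_pow_of_mul_eq_X (hy0 : constantCoeff y = 0) (hyS : y * S = X)
    (j : ℕ) : coeff j (d⁄dX R y * S ^ (j + 1)) = if j = 0 then 1 else 0 := by
  have hleib : d⁄dX R y * S = 1 - y * d⁄dX R S := by
    have h := congrArg (d⁄dX R) hyS
    rw [Derivation.leibniz, derivative_X, smul_eq_mul, smul_eq_mul] at h
    linear_combination h
  rcases j with _ | i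
  · rw [zero_add, pow_one, hleib, coeff_zero_eq_constantCoeff_apply, map_sub, map_mul, hy0]
    simp
  · have hsplit : d⁄dX R y * S ^ (i + 1 + 1) = S ^ (i + 1) - X * (d⁄dX R S * S ^ i) := by
      linear_combination S ^ (i + 1) * hleib - d⁄dX R S * S ^ i * hyS
    have hpow : (i + 1) • coeff (i + 1) (S ^ (i + 1)) = (i + 1) • coeff i (d⁄dX R S * S ^ i) := by
      rw [nsmul_eq_mul, mul_comm, Nat.cast_succ, ← coeff_derivative, derivative_pow,
        Nat.add_sub_cancel, mul_assoc, mul_comm (S ^ i), ← nsmul_eq_mul, map_nsmul]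
    rw [if_neg i.succ_ne_zero, hsplit, map_sub, coeff_succ_X_mul, sub_eq_zero]
    exact (nsmul_right_inj i.succ_ne_zero).mp hpow

theorem coeff_derivative_mul_pow_mul_pow_of_mul_eq_X (hy0 : constantCoeff y = 0)
    (hyS : y * S = X) {m N : ℕ} (h : m ≤ N) :
    coeff N (d⁄dX R y * S ^ (N + 1) * y ^ m) = if m = N then 1 else 0 := by
  obtain ⟨j, rfl⟩ := Nat.exists_eq_add_of_le h
  have hshift : d⁄dX R y * S ^ (m + j + 1) * y ^ m = X ^ m * (d⁄dX R y * S ^ (j + 1)) := by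
    rw [← hyS]
    ring
  rw [hshift, add_comm m j, coeff_X_pow_mul, coeff_derivative_mul_pow_of_mul_eq_X hy0 hyS]
  simp

theorem coeff_derivative_mul_subst_mul_pow_of_mul_eq_X (hy0 : constantCoeff y = 0)
    (hyS : y * S = X) (g : R⟦X⟧) (N : ℕ) :
    coeff N (d⁄dX R y * g.subst y * S ^ (N + 1)) = coeff N g := by
  rw [mul_right_comm, coeff_mul_subst_eq_sum_range hy0,
    Finset.sum_congr rfl fun m hm => by
      rw [coeff_derivative_mul_pow_mul_pow_of_mul_eq_X hy0 hyS
        (Nat.lt_succ_iff.mp (Finset.mem_range.mp hm)), mul_ite, mul_one, mul_zero]]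
  simp

end Residue

end PowerSeries

/-- Lagrange Inversion Formula: if `f(0) ≠ 0` and `y(x)` is the compositional
inverse of `x = y / f(y)` (i.e. `y(x)/f(y(x)) = x` with `y(0) = 0`), then
`coeff k y = [(d/dy)^(k-1) (f^k)](0) / k!` for all `k ≥ 1`. -/
theorem lagrange_inversion (K : Type*) [Field K] [CharZero K]
    (f : PowerSeries K) (hf : PowerSeries.constantCoeff f ≠ 0)
    (y : PowerSeries K) (hy0 : PowerSeries.constantCoeff y = 0)
    (hinv : psComp (PowerSeries.X * f⁻¹) y = PowerSeries.X) :
    ∀ k, 1 ≤ k →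
      PowerSeries.coeff k y =
        PowerSeries.constantCoeff (PowerSeries.derivativeFun^[k - 1] (f ^ k)) /
          k.factorial := by
  intro k hk
  obtain ⟨m, rfl⟩ := Nat.exists_eq_add_of_le' hk
  have hy := HasSubst.of_constantCoeff_zero' hy0
  have hfS : f.subst y * f⁻¹.subst y = (1 : K⟦X⟧) := by
    rw [← subst_mul hy, PowerSeries.mul_inv_cancel f hf, ← coe_substAlgHom hy, map_one]
  have hyS : y * f⁻¹.subst y = X := by
    rw [← hinv, psComp_eq_subst hy0, subst_mul hy, subst_X hy]
  have hres := coeff_derivative_mul_subst_mul_pow_of_mul_eq_X hy0 hyS (f ^ (m + 1)) m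
  rw [subst_pow hy, mul_assoc, ← mul_pow, hfS, one_pow, mul_one, coeff_derivative] at hres
  rw [Nat.add_sub_cancel, show derivativeFun^[m] = (d⁄dX K)^[m] from rfl,
    constantCoeff_iterate_derivative, ← hres, Nat.factorial_succ, Nat.cast_mul, Nat.cast_succ]
  have hfact : (m.factorial : K) ≠ 0 := Nat.cast_ne_zero.mpr m.factorial_ne_zero
  field_simp [Nat.cast_add_one_ne_zero m]
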